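/- arXiv:2007.04711 — 2 statements merged into one kernel-verified Lean document; each statement's English description precedes it below -/
import Mathlib

section
/- Let $(T(t))_{t\ge 0}$ be a $C_0$-semigroup on a Banach space $X$ such that for every $x\in X$ there exist $M(x)>0$ and $\omega(x)>0$ with $\|T(t)x\|\le M(x)e^{-\omega(x)t}$ for all $t\ge 0$. Then there exist constants $M>0$ and $\omega>0$, independent of $x$, such that $\|T(t)\|\le Me^{-\omega t}$ for all $t\ge 0$. -/
open Filter Topology

/-- A `C₀`-semigroup on a Banach space: `T 0 = 1`, the semigroup law holds for
nonnegative times, and orbits are continuous on `[0, ∞)`. -/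
def IsC0Semigroup {X : Type*} [NormedAddCommGroup X] [NormedSpace ℂ X]
    (T : ℝ → X →L[ℂ] X) : Prop :=
  T 0 = 1 ∧ (∀ s t : ℝ, 0 ≤ s → 0 ≤ t → T (s + t) = T s ∘L T t) ∧
    ∀ x : X, ContinuousOn (fun t => T t x) (Set.Ici 0)

/-- if every orbit of a `C₀`-semigroup decays exponentially (with
constants depending on the initial value), then the semigroup is uniformly
exponentially stable. -/
theorem pointwise_exponential_decay_implies_uniform
    {X : Type*} [NormedAddCommGroup X] [NormedSpace ℂ X] [CompleteSpace X]
    (T : ℝ → X →L[ℂ] X) (hT : IsC0Semigroup T)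
    (h : ∀ x : X, ∃ M > (0 : ℝ), ∃ ω > (0 : ℝ),
      ∀ t : ℝ, 0 ≤ t → ‖T t x‖ ≤ M * Real.exp (-ω * t)) :
    ∃ M > (0 : ℝ), ∃ ω > (0 : ℝ),
      ∀ t : ℝ, 0 ≤ t → ‖T t‖ ≤ M * Real.exp (-ω * t) := by
  set S : ℕ → Set X := fun n =>
    {x | ∀ t : ℝ, 0 ≤ t → ‖T t x‖ ≤ (n + 1) * Real.exp (-(1 / (n + 1)) * t)} with hS
  have hclosed : ∀ n, IsClosed (S n) := by
    intro n
    have : S n = ⋂ t ∈ Set.Ici (0 : ℝ),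
        {x | ‖T t x‖ ≤ (n + 1) * Real.exp (-(1 / (n + 1)) * t)} := by
      ext x; simp [hS, Set.mem_iInter]
    rw [this]
    exact isClosed_biInter fun t _ => isClosed_le ((T t).continuous.norm) continuous_const
  have hcover : (⋃ n, S n) = Set.univ := by
    ext x
    simp only [Set.mem_iUnion, Set.mem_univ, iff_true]
    obtain ⟨M, hM, ω, hω, hx⟩ := h x
    obtain ⟨n, hn⟩ := exists_nat_ge (max M (1 / ω))
    refine ⟨n, fun t ht => ?_⟩
    have hn1 : (0 : ℝ) < (n : ℝ) + 1 := by positivity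
    have hMn : M ≤ (n : ℝ) + 1 := le_trans (le_max_left _ _) (hn.trans (by linarith))
    have hωn : 1 / ((n : ℝ) + 1) ≤ ω := by
      rw [div_le_iff₀ hn1]
      have : 1 / ω ≤ (n : ℝ) + 1 := le_trans (le_max_right _ _) (hn.trans (by linarith))
      calc (1 : ℝ) = ω * (1 / ω) := by field_simp
        _ ≤ ω * ((n : ℝ) + 1) := by nlinarith
    calc ‖T t x‖ ≤ M * Real.exp (-ω * t) := hx t ht
      _ ≤ ((n : ℝ) + 1) * Real.exp (-(1 / (n + 1)) * t) := by
          apply mul_le_mul hMn _ (Real.exp_nonneg _) (by positivity)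
          apply Real.exp_le_exp.2
          nlinarith
  obtain ⟨n, x0, hx0⟩ := nonempty_interior_of_iUnion_of_closed hclosed hcover
  obtain ⟨ε, hε, hball⟩ := Metric.mem_nhds_iff.1 (mem_interior_iff_mem_nhds.1 hx0)
  have hx0S : x0 ∈ S n := hball (Metric.mem_ball_self hε)
  refine ⟨4 * ((n : ℝ) + 1) / ε, by positivity, 1 / ((n : ℝ) + 1), by positivity, fun t ht => ?_⟩
  apply (T t).opNorm_le_bound (by positivity)
  intro x
  rcases eq_or_ne x 0 with rfl | hx
  · simp
  · have hxn : (0 : ℝ) < ‖x‖ := norm_pos_iff.2 hx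
    set c : ℂ := ((ε / (2 * ‖x‖) : ℝ) : ℂ) with hc
    have hcnorm : ‖c‖ = ε / (2 * ‖x‖) := by
      rw [hc, Complex.norm_real, Real.norm_eq_abs, abs_of_pos (by positivity)]
    have hmem : x0 + c • x ∈ S n := by
      apply hball
      rw [Metric.mem_ball, dist_eq_norm]
      have : ‖x0 + c • x - x0‖ = ‖c‖ * ‖x‖ := by rw [add_sub_cancel_left, norm_smul]
      rw [this, hcnorm]
      have heq : ε / (2 * ‖x‖) * ‖x‖ = ε / 2 := by field_simp
      rw [heq]; linarith
    have key : ‖T t (c • x)‖ ≤ 2 * (((n : ℝ) + 1) * Real.exp (-(1 / (n + 1)) * t)) := by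
      have h1 := hmem t ht
      have h2 := hx0S t ht
      have : T t (c • x) = T t (x0 + c • x) - T t x0 := by rw [map_add]; abel
      rw [this]
      calc ‖T t (x0 + c • x) - T t x0‖ ≤ ‖T t (x0 + c • x)‖ + ‖T t x0‖ := norm_sub_le _ _
        _ ≤ _ := by linarith
    have hsmul : ‖T t (c • x)‖ = (ε / (2 * ‖x‖)) * ‖T t x‖ := by
      rw [map_smul, norm_smul, hcnorm]
    rw [hsmul] at key
    set B : ℝ := ((n : ℝ) + 1) * Real.exp (-(1 / (n + 1)) * t) with hB
    have hBpos : 0 < B := by rw [hB]; positivity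
    have key' : ε * ‖T t x‖ ≤ 4 * B * ‖x‖ := by
      have h2x : (0 : ℝ) < 2 * ‖x‖ := by positivity
      have := mul_le_mul_of_nonneg_left key (le_of_lt h2x)
      rw [← mul_assoc, mul_div_cancel₀ _ (ne_of_gt h2x)] at this
      nlinarith
    have : 4 * ((n : ℝ) + 1) / ε * Real.exp (-(1 / (n + 1)) * t) * ‖x‖ = 4 * B * ‖x‖ / ε := by
      rw [hB]; ring
    rw [this, le_div_iff₀ hε]
    nlinarith
end

section
/- Let $(T(t))_{t\ge 0}$ be a $C_0$-semigroup on a Banach space $X$ and suppose there exist $p\in[1,\infty)$ and $C>0$ such that $\int_0^\infty\|T(t)x\|^p\,dt\le C\|x\|^p$ for all $x\in X$. Then $(T(t))_{t\ge 0}$ is exponentially stable; moreover its exponential growth bound satisfies $\omega(T)\le -(pC)^{-1}$. -/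
/-! Write `G(r) = ∫_r^∞ ‖T(t)x‖^p dt`. The hypothesis applied to `T(r)x` gives
`G(r) ≤ C‖T(r)x‖^p = -C G'(r)`, so `G` decays like `e^{-r/C}`. In discrete form, averaging
over `[a, a + e]` gives `G(a + e) ≤ C/(e + C) · G(a)`, and the step `e = 1/ε - C` yields decay at
any rate `ε < 1/C`. Since `T` is bounded on `[0, 1]` (uniform boundedness), `‖T(t)x‖^p` is
controlled by `G(t - 1)`, so `‖T(t)‖ ≲ e^{-εt/p}`. -/

open MeasureTheory Set ENNReal

theorem Antitone.le_ofReal_exp_mul_of_add_le {u : ℝ → ℝ≥0∞} (hu : Antitone u) {e ε : ℝ}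
    (he : 0 < e) (hε : 0 ≤ ε)
    (hstep : ∀ a, 0 ≤ a → u (a + e) ≤ ENNReal.ofReal (Real.exp (-(ε * e))) * u a)
    {t : ℝ} (ht : 0 ≤ t) :
    u t ≤ ENNReal.ofReal (Real.exp (ε * (e - t))) * u 0 := by
  have hiter : ∀ n : ℕ, u (n * e) ≤ ENNReal.ofReal (Real.exp (-(ε * (n * e)))) * u 0 := by
    intro n
    induction n with
    | zero => simp
    | succ n ih =>
      calc u ((n + 1 : ℕ) * e) = u (n * e + e) := by push_cast; ring_nf
        _ ≤ ENNReal.ofReal (Real.exp (-(ε * e))) * u (n * e) := hstep _ (by positivity)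
        _ ≤ ENNReal.ofReal (Real.exp (-(ε * e)))
              * (ENNReal.ofReal (Real.exp (-(ε * (n * e)))) * u 0) := by gcongr
        _ = ENNReal.ofReal (Real.exp (-(ε * ((n + 1 : ℕ) * e)))) * u 0 := by
          rw [← mul_assoc, ← ENNReal.ofReal_mul (Real.exp_pos _).le, ← Real.exp_add]
          push_cast; ring_nf
  set n := ⌊t / e⌋₊
  have hn_le : n * e ≤ t := (le_div_iff₀ he).mp (Nat.floor_le (div_nonneg ht he.le))
  have hlt_n : t < n * e + e := by
    have := Nat.lt_floor_add_one (t / e)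
    rw [div_lt_iff₀ he] at this
    linarith
  calc u t ≤ u (n * e) := hu hn_le
    _ ≤ ENNReal.ofReal (Real.exp (-(ε * (n * e)))) * u 0 := hiter n
    _ ≤ ENNReal.ofReal (Real.exp (ε * (e - t))) * u 0 := by
      gcongr
      nlinarith

theorem ContinuousLinearMap.opNorm_le_rpow_inv_of_rpow_le {𝕜 E F : Type*}
    [NontriviallyNormedField 𝕜] [SeminormedAddCommGroup E] [SeminormedAddCommGroup F]
    [NormedSpace 𝕜 E] [NormedSpace 𝕜 F]
    (A : E →L[𝕜] F) {K p : ℝ} (hK : 0 ≤ K) (hp : 0 < p) (h : ∀ x, ‖A x‖ ^ p ≤ K * ‖x‖ ^ p) :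
    ‖A‖ ≤ K ^ p⁻¹ :=
  A.opNorm_le_bound (by positivity) fun x => by
    rw [← Real.rpow_le_rpow_iff (norm_nonneg _) (by positivity) hp,
      Real.mul_rpow (by positivity) (norm_nonneg _), Real.rpow_inv_rpow hK hp.ne']
    exact h x

theorem exists_norm_le_mul_exp_of_le {E : Type*} [SeminormedAddGroup E] {A : ℝ → E}
    {ω₁ ω₂ : ℝ} (h : ∃ M : ℝ, ∀ t : ℝ, 0 ≤ t → ‖A t‖ ≤ M * Real.exp (ω₁ * t)) (hω : ω₁ ≤ ω₂) :
    ∃ M : ℝ, ∀ t : ℝ, 0 ≤ t → ‖A t‖ ≤ M * Real.exp (ω₂ * t) := by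
  obtain ⟨M, hM⟩ := h
  have hM0 : 0 ≤ M := by simpa using (norm_nonneg _).trans (hM 0 le_rfl)
  exact ⟨M, fun t ht => (hM t ht).trans (by gcongr)⟩

theorem mul_ofReal_sub_le_mul_setLIntegral_Ioc {f : ℝ → ℝ≥0∞} {y c : ℝ≥0∞} (hc : c ≠ ∞)
    {a b : ℝ} (h : ∀ s ∈ Ioc a b, y ≤ c * f s) :
    y * ENNReal.ofReal (b - a) ≤ c * ∫⁻ s in Ioc a b, f s :=
  calc y * ENNReal.ofReal (b - a) = ∫⁻ _ in Ioc a b, y := by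
        rw [setLIntegral_const, Real.volume_Ioc]
    _ ≤ ∫⁻ s in Ioc a b, c * f s := setLIntegral_mono' measurableSet_Ioc h
    _ = c * ∫⁻ s in Ioc a b, f s := lintegral_const_mul' c f hc

def TailDominated (C : ℝ) (f : ℝ → ℝ≥0∞) : Prop :=
  ∀ r, 0 ≤ r → ∫⁻ t in Ioi r, f t ≤ ENNReal.ofReal C * f r

namespace TailDominated

variable {C : ℝ} {f : ℝ → ℝ≥0∞}

theorem lintegral_Ioi_mul_le (hf : TailDominated C f) (hC : 0 ≤ C) {a b : ℝ} (ha : 0 ≤ a)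
    (hab : a ≤ b) :
    (∫⁻ t in Ioi b, f t) * ENNReal.ofReal (b - a + C) ≤
      ENNReal.ofReal C * ∫⁻ t in Ioi a, f t := by
  have hsplit : ∫⁻ t in Ioi a, f t = (∫⁻ t in Ioc a b, f t) + ∫⁻ t in Ioi b, f t := by
    rw [← lintegral_union measurableSet_Ioi Ioc_disjoint_Ioi_same, Ioc_union_Ioi_eq_Ioi hab]
  have hmiddle : (∫⁻ t in Ioi b, f t) * ENNReal.ofReal (b - a)
      ≤ ENNReal.ofReal C * ∫⁻ t in Ioc a b, f t :=
    mul_ofReal_sub_le_mul_setLIntegral_Ioc ofReal_ne_top fun s hs =>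
      (lintegral_mono_set (Ioi_subset_Ioi hs.2)).trans (hf s (ha.trans hs.1.le))
  calc (∫⁻ t in Ioi b, f t) * ENNReal.ofReal (b - a + C)
      = (∫⁻ t in Ioi b, f t) * ENNReal.ofReal (b - a)
          + ENNReal.ofReal C * ∫⁻ t in Ioi b, f t := by
        rw [ENNReal.ofReal_add (by linarith) hC]; ring
    _ ≤ ENNReal.ofReal C * ∫⁻ t in Ioi a, f t := by
        rw [hsplit, mul_add]; gcongr

theorem lintegral_Ioi_add_le (hf : TailDominated C f) (hC : 0 < C) {a e : ℝ} (ha : 0 ≤ a)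
    (he : 0 ≤ e) :
    ∫⁻ t in Ioi (a + e), f t ≤ ENNReal.ofReal (C / (e + C)) * ∫⁻ t in Ioi a, f t := by
  have heC : 0 < e + C := by linarith
  have hstep := hf.lintegral_Ioi_mul_le hC.le ha (le_add_of_nonneg_right he)
  rw [add_sub_cancel_left] at hstep
  rwa [ENNReal.ofReal_div_of_pos heC, div_eq_mul_inv, mul_right_comm, ← div_eq_mul_inv,
    ENNReal.le_div_iff_mul_le (Or.inl (by simpa using heC)) (Or.inl ofReal_ne_top)]

theorem lintegral_Ioi_le (hf : TailDominated C f) (hC : 0 < C) {ε : ℝ} (hε : 0 < ε)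
    (hεC : ε * C < 1) {t : ℝ} (ht : 0 ≤ t) :
    ∫⁻ s in Ioi t, f s ≤ ENNReal.ofReal (Real.exp (1 - ε * C - ε * t)) * ∫⁻ s in Ioi 0, f s := by
  -- chosen so that the contraction factor `C / (e + C)` equals `ε * C`
  set e := ε⁻¹ - C
  have he : 0 < e := by
    rwa [sub_pos, lt_inv_comm₀ hC hε, ← one_div, lt_div_iff₀ hC]
  have hfactor : C / (e + C) ≤ Real.exp (-(ε * e)) :=
    calc C / (e + C) = (ε * C - 1) + 1 := by simp only [e, sub_add_cancel, div_inv_eq_mul]; ring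
      _ ≤ Real.exp (ε * C - 1) := Real.add_one_le_exp _
      _ = Real.exp (-(ε * e)) := by
        congr 1
        simp only [e, mul_sub, mul_inv_cancel₀ hε.ne']
        ring
  have hdecay := Antitone.le_ofReal_exp_mul_of_add_le (u := fun r => ∫⁻ s in Ioi r, f s)
    (fun a b hab => lintegral_mono_set (Ioi_subset_Ioi hab)) he hε.le
    (fun a ha => (hf.lintegral_Ioi_add_le hC ha he.le).trans (by gcongr)) ht
  convert hdecay using 4
  simp only [e, mul_sub, mul_inv_cancel₀ hε.ne']

end TailDominated

namespace IsC0Semigroup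

variable {X : Type*} [NormedAddCommGroup X] [NormedSpace ℂ X] {T : ℝ → X →L[ℂ] X}

theorem apply_add (hT : IsC0Semigroup T) {s t : ℝ} (hs : 0 ≤ s) (ht : 0 ≤ t) (x : X) :
    T (s + t) x = T s (T t x) := by
  rw [hT.2.1 s t hs ht]
  rfl

theorem exists_opNorm_le_on_Icc [CompleteSpace X] (hT : IsC0Semigroup T) (τ : ℝ) :
    ∃ M, 0 ≤ M ∧ ∀ s ∈ Icc 0 τ, ‖T s‖ ≤ M := by
  obtain ⟨M, hM⟩ := banach_steinhaus (g := fun s : Icc (0 : ℝ) τ => T s) fun x => by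
    obtain ⟨B, hB⟩ :=
      isCompact_Icc.exists_bound_of_continuousOn ((hT.2.2 x).mono Icc_subset_Ici_self)
    exact ⟨B, fun s => hB s s.2⟩
  exact ⟨max M 0, le_max_right _ _, fun s hs => (hM ⟨s, hs⟩).trans (le_max_left _ _)⟩

theorem tailDominated (hT : IsC0Semigroup T) {p C : ℝ} (hC : 0 ≤ C)
    (h : ∀ x : X, ∫⁻ t in Ioi (0 : ℝ), ENNReal.ofReal (‖T t x‖ ^ p) ≤
      ENNReal.ofReal (C * ‖x‖ ^ p)) (x : X) :
    TailDominated C fun t => ENNReal.ofReal (‖T t x‖ ^ p) := by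
  intro r hr
  have hshift := (measurePreserving_add_right volume r).setLIntegral_comp_preimage_emb
    (MeasurableEquiv.addRight r).measurableEmbedding
    (fun t => ENNReal.ofReal (‖T t x‖ ^ p)) (Ioi r)
  have hpre : (fun t : ℝ => t + r) ⁻¹' Ioi r = Ioi 0 := by
    ext t
    simp
  rw [hpre] at hshift
  calc ∫⁻ t in Ioi r, ENNReal.ofReal (‖T t x‖ ^ p)
      = ∫⁻ t in Ioi 0, ENNReal.ofReal (‖T t (T r x)‖ ^ p) := by
        rw [← hshift]
        refine setLIntegral_congr_fun measurableSet_Ioi fun t ht => ?_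
        rw [hT.apply_add ht.le hr]
    _ ≤ ENNReal.ofReal (C * ‖T r x‖ ^ p) := h (T r x)
    _ = ENNReal.ofReal C * ENNReal.ofReal (‖T r x‖ ^ p) := ENNReal.ofReal_mul hC

theorem ofReal_rpow_norm_apply_le (hT : IsC0Semigroup T) {M p : ℝ} (hM0 : 0 ≤ M)
    (hM : ∀ s ∈ Icc 0 1, ‖T s‖ ≤ M) (hp : 0 ≤ p) (x : X) {t : ℝ} (ht : 1 ≤ t) :
    ENNReal.ofReal (‖T t x‖ ^ p) ≤
      ENNReal.ofReal (M ^ p) * ∫⁻ s in Ioi (t - 1), ENNReal.ofReal (‖T s x‖ ^ p) := by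
  have hpointwise : ∀ s ∈ Ioc (t - 1) t,
      ENNReal.ofReal (‖T t x‖ ^ p) ≤ ENNReal.ofReal (M ^ p) * ENNReal.ofReal (‖T s x‖ ^ p) := by
    intro s ⟨hs₁, hs₂⟩
    have hnorm : ‖T t x‖ ≤ M * ‖T s x‖ :=
      calc ‖T t x‖ = ‖T (t - s) (T s x)‖ := by
            rw [← hT.apply_add (by linarith) (by linarith), sub_add_cancel]
        _ ≤ ‖T (t - s)‖ * ‖T s x‖ := (T (t - s)).le_opNorm _
        _ ≤ M * ‖T s x‖ := by gcongr; exact hM _ ⟨by linarith, by linarith⟩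
    rw [← ENNReal.ofReal_mul (by positivity), ← Real.mul_rpow hM0 (norm_nonneg _)]
    gcongr
  calc ENNReal.ofReal (‖T t x‖ ^ p)
      = ENNReal.ofReal (‖T t x‖ ^ p) * ENNReal.ofReal (t - (t - 1)) := by simp
    _ ≤ ENNReal.ofReal (M ^ p) * ∫⁻ s in Ioc (t - 1) t, ENNReal.ofReal (‖T s x‖ ^ p) :=
        mul_ofReal_sub_le_mul_setLIntegral_Ioc ENNReal.ofReal_ne_top hpointwise
    _ ≤ ENNReal.ofReal (M ^ p) * ∫⁻ s in Ioi (t - 1), ENNReal.ofReal (‖T s x‖ ^ p) := by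
        gcongr
        exact Ioc_subset_Ioi_self

theorem exists_rpow_norm_apply_le [CompleteSpace X] (hT : IsC0Semigroup T) {p C ε : ℝ}
    (hp : 0 ≤ p) (hC : 0 < C)
    (h : ∀ x : X, ∫⁻ t in Ioi (0 : ℝ), ENNReal.ofReal (‖T t x‖ ^ p) ≤
      ENNReal.ofReal (C * ‖x‖ ^ p))
    (hε : 0 < ε) (hεC : ε * C < 1) :
    ∃ K, 0 ≤ K ∧ ∀ x t, 0 ≤ t → ‖T t x‖ ^ p ≤ K * Real.exp (-(ε * t)) * ‖x‖ ^ p := by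
  obtain ⟨M, hM0, hM⟩ := hT.exists_opNorm_le_on_Icc 1
  refine ⟨M ^ p * max 1 C * Real.exp (1 + ε), by positivity, fun x t ht => ?_⟩
  have hexp : Real.exp (1 + ε) * Real.exp (-(ε * t)) = Real.exp (1 + ε - ε * t) := by
    rw [← Real.exp_add]
    ring_nf
  rcases lt_or_ge t 1 with ht1 | ht1
  · calc ‖T t x‖ ^ p ≤ (M * ‖x‖) ^ p := by
          gcongr
          exact (T t).le_of_opNorm_le (hM t ⟨ht, ht1.le⟩) x
      _ = M ^ p * 1 * 1 * ‖x‖ ^ p := by rw [Real.mul_rpow hM0 (norm_nonneg _)]; ring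
      _ ≤ M ^ p * max 1 C * Real.exp (1 + ε - ε * t) * ‖x‖ ^ p := by
          gcongr
          · exact le_max_left _ _
          · exact Real.one_le_exp (by nlinarith)
      _ = _ := by rw [← hexp]; ring
  · have htail := (hT.tailDominated hC.le h x).lintegral_Ioi_le hC hε hεC
      (by linarith : 0 ≤ t - 1)
    have hlin := calc ENNReal.ofReal (‖T t x‖ ^ p)
        _ ≤ ENNReal.ofReal (M ^ p) * ∫⁻ s in Ioi (t - 1), ENNReal.ofReal (‖T s x‖ ^ p) :=
          hT.ofReal_rpow_norm_apply_le hM0 hM hp x ht1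
        _ ≤ ENNReal.ofReal (M ^ p) * (ENNReal.ofReal (Real.exp (1 - ε * C - ε * (t - 1))) *
            ENNReal.ofReal (C * ‖x‖ ^ p)) := by
          grw [htail, h x]
    rw [← ENNReal.ofReal_mul (by positivity), ← ENNReal.ofReal_mul (by positivity),
      ENNReal.ofReal_le_ofReal_iff (by positivity)] at hlin
    calc ‖T t x‖ ^ p ≤ M ^ p * C * Real.exp (1 - ε * C - ε * (t - 1)) * ‖x‖ ^ p := by
          linarith
      _ ≤ M ^ p * max 1 C * Real.exp (1 + ε - ε * t) * ‖x‖ ^ p := by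
          gcongr M ^ p * ?_ * Real.exp ?_ * _
          · exact le_max_right _ _
          · nlinarith
      _ = _ := by rw [← hexp]; ring

end IsC0Semigroup

/-- Datko–Pazy with Weiss's quantitative bound: if
`∫₀^∞ ‖T(t)x‖^p dt ≤ C‖x‖^p` for all `x`, then the growth bound of the
semigroup satisfies `ω(T) ≤ -(pC)⁻¹`; in particular the semigroup is
exponentially stable. -/
theorem datko_pazy_quantitative
    {X : Type*} [NormedAddCommGroup X] [NormedSpace ℂ X] [CompleteSpace X]
    (T : ℝ → X →L[ℂ] X) (hT : IsC0Semigroup T)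
    (p : ℝ) (hp : 1 ≤ p) (C : ℝ) (hC : 0 < C)
    (h : ∀ x : X, ∫⁻ t in Set.Ioi (0 : ℝ), ENNReal.ofReal (‖T t x‖ ^ p) ≤
      ENNReal.ofReal (C * ‖x‖ ^ p)) :
    ∀ ω : ℝ, -(p * C)⁻¹ < ω →
      ∃ M : ℝ, ∀ t : ℝ, 0 ≤ t → ‖T t‖ ≤ M * Real.exp (ω * t) := by
  intro ω hω
  have hp0 : 0 < p := by linarith
  have hpC : 0 < p * C := by positivity
  have hpC_inv : 0 < (p * C)⁻¹ := inv_pos.mpr hpC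
  set ω' := min ω (-(p * C)⁻¹ / 2)
  have hω'_neg : ω' < 0 := (min_le_right _ _).trans_lt (by linarith)
  have hω'_gt : -1 < ω' * (p * C) := by
    have := mul_lt_mul_of_pos_right
      (lt_min hω (by linarith : -(p * C)⁻¹ < -(p * C)⁻¹ / 2)) hpC
    rwa [neg_mul, inv_mul_cancel₀ hpC.ne'] at this
  refine exists_norm_le_mul_exp_of_le (ω₁ := ω') ?_ (min_le_left _ _)
  obtain ⟨K, hK, hdecay⟩ := hT.exists_rpow_norm_apply_le hp0.le hC h (ε := -(p * ω'))
    (by nlinarith) (by nlinarith)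
  refine ⟨K ^ p⁻¹, fun t ht => ?_⟩
  calc ‖T t‖ ≤ (K * Real.exp (-(-(p * ω') * t))) ^ p⁻¹ :=
        (T t).opNorm_le_rpow_inv_of_rpow_le (by positivity) hp0 fun x => hdecay x t ht
    _ = K ^ p⁻¹ * Real.exp (ω' * t) := by
        rw [Real.mul_rpow hK (Real.exp_pos _).le, ← Real.exp_mul]
        congr 2
        field_simp
end
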